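/- arXiv:1506.03236 — 6 statements merged into one kernel-verified Lean document; each statement's English description precedes it below -/
import Mathlib

section
/- Let W be a DMC with finite input alphabet X and finite output alphabet Y, with capacity C = max_P I(P,W), let P* be a capacity-achieving input distribution, and let Q* = P*W be the capacity-achieving output distribution. Then for any input distribution P' with induced output distribution Q' = P'W, one has I(P', W) ≤ C − D(Q' ‖ Q*); moreover, equality holds if supp(P') ⊆ supp(P*). -/
/-!
STATEMENT 4: Let `C` be the capacity of a DMC `W`, `P*` a capacity-achieving input
distribution and `Q* = P*W` the capacity-achieving output distribution. Then for any
input distribution `P'` with induced output distribution `Q' = P'W`,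
`I(P', W) ≤ C − D(Q' ‖ Q*)`, with equality if `supp(P') ⊆ supp(P*)`.
-/

open scoped BigOperators

/-- `p` is a probability mass function on a finite type. -/
def IsDist {α : Type*} [Fintype α] (p : α → ℝ) : Prop :=
  (∀ a, 0 ≤ p a) ∧ ∑ a, p a = 1

/-- Relative entropy (in nats) between pmfs on a finite type. -/
noncomputable def relEnt {α : Type*} [Fintype α] (p q : α → ℝ) : ℝ :=
  ∑ a, p a * Real.log (p a / q a)

/-- Output distribution on `Y` induced by input distribution `P` through channel `W`. -/
noncomputable def outDist {X Y : Type*} [Fintype X] (P : X → ℝ) (W : X → Y → ℝ) : Y → ℝ :=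
  fun y => ∑ x, P x * W x y

/-- Mutual information `I(P, W)`. -/
noncomputable def mutInfo {X Y : Type*} [Fintype X] [Fintype Y] (P : X → ℝ) (W : X → Y → ℝ) : ℝ :=
  ∑ x, ∑ y, P x * W x y * Real.log (W x y / outDist P W y)

/-!
For `t ∈ (0, 1)` put `Pₜ = (1 - t) P* + t P'` and `Qₜ = Pₜ W`. The identity
`∑ₓ P x · D(W(·|x) ‖ R W) = I(P, W) + D(P W ‖ R W)` (for `supp P ⊆ supp R`), applied to `Pₜ`,
`P*` and `P'`, expresses `I(Pₜ, W)` as `(1 - t) (C + D(Q* ‖ Qₜ)) + t (I(P', W) + D(Q' ‖ Qₜ))`;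
since `I(Pₜ, W) ≤ C` and `D(Q* ‖ Qₜ) ≥ 0`, this gives `I(P', W) + D(Q' ‖ Qₜ) ≤ C`. As `t → 0`,
`D(Q' ‖ Qₜ) → D(Q' ‖ Q*)` when `Q' ≪ Q*`, and otherwise it grows like `-log t`, which is absurd.
Because `relEnt` reads `log (p / 0)` as `0`, that absolute continuity has to be tracked by hand.

Taking `P'` a point mass gives the Kuhn–Tucker bound `D(W(·|x) ‖ Q*) ≤ C`; its `P*`-average is
`C`, so it is an equality on `supp P*`, and averaging it against `P'` gives the equality case.
-/

open Real Filter Topology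

lemma sub_le_mul_log_div {p q : ℝ} (hp : 0 ≤ p) (hq : 0 ≤ q) (hpq : p ≠ 0 → q ≠ 0) :
    p - q ≤ p * log (p / q) := by
  rcases hp.eq_or_lt with rfl | hp
  · simpa using hq
  have hq : 0 < q := hq.lt_of_ne (hpq hp.ne').symm
  calc p - q = p * (1 - (p / q)⁻¹) := by field_simp
    _ ≤ p * log (p / q) :=
      mul_le_mul_of_nonneg_left (one_sub_inv_le_log_of_pos (by positivity)) hp.le

section RelEnt

variable {α : Type*} [Fintype α] {p q : α → ℝ}

lemma IsDist.mix (hp : IsDist p) (hq : IsDist q) {a b : ℝ} (ha : 0 ≤ a) (hb : 0 ≤ b)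
    (hab : a + b = 1) : IsDist (a • p + b • q) :=
  convex_stdSimplex ℝ α hp hq ha hb hab

lemma relEnt_self (p : α → ℝ) : relEnt p p = 0 :=
  Finset.sum_eq_zero fun a _ => by by_cases h : p a = 0 <;> simp [h]

lemma sum_sub_le_relEnt (hp : ∀ a, 0 ≤ p a) (hq : ∀ a, 0 ≤ q a) (hpq : ∀ a, p a ≠ 0 → q a ≠ 0) :
    ∑ a, (p a - q a) ≤ relEnt p q :=
  Finset.sum_le_sum fun a _ => sub_le_mul_log_div (hp a) (hq a) (hpq a)

lemma relEnt_nonneg (hp : IsDist p) (hq : IsDist q) (hpq : ∀ a, p a ≠ 0 → q a ≠ 0) :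
    0 ≤ relEnt p q := by
  simpa [Finset.sum_sub_distrib, hp.2, hq.2] using sum_sub_le_relEnt hp.1 hq.1 hpq

lemma continuousAt_relEnt_mix (hqp : ∀ a, q a ≠ 0 → p a ≠ 0) :
    ContinuousAt (fun t : ℝ => relEnt q ((1 - t) • p + t • q)) 0 := by
  refine tendsto_finsetSum _ fun a _ => ?_
  by_cases hq : q a = 0
  · simp [hq]
  · have hp := hqp a hq
    refine continuousAt_const.mul (ContinuousAt.log ?_ (by simpa using div_ne_zero hq hp))
    exact continuousAt_const.div (by fun_prop) (by simpa using hp)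

lemma neg_mul_one_add_log_le_relEnt_mix (hp : IsDist p) (hq : IsDist q) {a₀ : α} (ha₀ : p a₀ = 0)
    {t : ℝ} (ht₀ : 0 < t) (ht₁ : t ≤ 1) :
    -(q a₀ * (1 + log t)) ≤ relEnt q ((1 - t) • p + t • q) := by
  set r := (1 - t) • p + t • q
  have hr : IsDist r := hp.mix hq (by linarith) ht₀.le (by ring)
  have hqr : ∀ a, q a ≠ 0 → r a ≠ 0 := fun a ha => by
    have := mul_pos ht₀ ((hq.1 a).lt_of_ne' ha)
    have := mul_nonneg (sub_nonneg.2 ht₁) (hp.1 a)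
    simp only [r, Pi.add_apply, Pi.smul_apply, smul_eq_mul]
    positivity
  have hgap : ∀ a, 0 ≤ q a * log (q a / r a) - (q a - r a) := fun a =>
    sub_nonneg.2 (sub_le_mul_log_div (hq.1 a) (hr.1 a) (hqr a))
  have hr₀ : q a₀ * log (q a₀ / r a₀) = -(q a₀ * log t) := by
    by_cases h : q a₀ = 0
    · simp [h]
    · simp [r, ha₀, div_mul_cancel_right₀ h]
  have hsum : ∑ a, (q a * log (q a / r a) - (q a - r a)) = relEnt q r := by
    simp [relEnt, Finset.sum_sub_distrib, hq.2, hr.2]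
  have := Finset.single_le_sum (fun a _ => hgap a) (Finset.mem_univ a₀)
  rw [hsum, hr₀] at this
  have hra₀ : r a₀ = t * q a₀ := by simp [r, ha₀]
  linarith [mul_nonneg ht₀.le (hq.1 a₀)]

end RelEnt

section Channel

variable {X Y : Type*} [Fintype X] {W : X → Y → ℝ} {P P' R : X → ℝ}

lemma outDist_smul_add_smul (a b : ℝ) (P P' : X → ℝ) (W : X → Y → ℝ) :
    outDist (a • P + b • P') W = a • outDist P W + b • outDist P' W := by
  ext y
  simp [outDist, add_mul, Finset.sum_add_distrib, Finset.mul_sum, mul_assoc]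

lemma IsDist.outDist [Fintype Y] (hP : IsDist P) (hW : ∀ x, IsDist (W x)) :
    IsDist (outDist P W) := by
  refine ⟨fun y => Finset.sum_nonneg fun x _ => mul_nonneg (hP.1 x) ((hW x).1 y), ?_⟩
  simp only [_root_.outDist]
  rw [Finset.sum_comm]
  simp [← Finset.mul_sum, (hW _).2, hP.2]

lemma outDist_ne_zero (hP : ∀ x, 0 ≤ P x) (hW : ∀ x y, 0 ≤ W x y) {x : X} {y : Y}
    (hx : P x ≠ 0) (hy : W x y ≠ 0) : outDist P W y ≠ 0 :=
  (Finset.single_le_sum (fun x _ => mul_nonneg (hP x) (hW x y)) (Finset.mem_univ x)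
    |>.trans_lt' (mul_pos ((hP x).lt_of_ne' hx) ((hW x y).lt_of_ne' hy))).ne'

lemma outDist_ne_zero_of_support (hR : ∀ x, 0 ≤ R x) (hW : ∀ x y, 0 ≤ W x y)
    (hPR : ∀ x, P x ≠ 0 → R x ≠ 0) {y : Y} (hy : outDist P W y ≠ 0) : outDist R W y ≠ 0 := by
  obtain ⟨x, -, hx⟩ := Finset.exists_ne_zero_of_sum_ne_zero hy
  exact outDist_ne_zero hR hW (hPR x (left_ne_zero_of_mul hx)) (right_ne_zero_of_mul hx)

lemma sum_mul_relEnt_outDist [Fintype Y] (hP : ∀ x, 0 ≤ P x) (hR : ∀ x, 0 ≤ R x)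
    (hW : ∀ x y, 0 ≤ W x y) (hPR : ∀ x, P x ≠ 0 → R x ≠ 0) :
    ∑ x, P x * relEnt (W x) (outDist R W) = mutInfo P W + relEnt (outDist P W) (outDist R W) := by
  have hD : relEnt (outDist P W) (outDist R W)
      = ∑ x, ∑ y, P x * W x y * log (outDist P W y / outDist R W y) := by
    simp only [relEnt, outDist, Finset.sum_mul]
    exact Finset.sum_comm
  rw [hD]
  simp only [mutInfo, relEnt, Finset.mul_sum, ← Finset.sum_add_distrib]
  refine Finset.sum_congr rfl fun x _ => Finset.sum_congr rfl fun y _ => ?_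
  by_cases hx : P x = 0
  · simp [hx]
  by_cases hy : W x y = 0
  · simp [hy]
  have hPy := outDist_ne_zero hP hW hx hy
  have hRy := outDist_ne_zero hR hW (hPR x hx) hy
  rw [log_div hy hRy, log_div hy hPy, log_div hPy hRy]
  ring

end Channel

section Capacity

variable {X Y : Type*} [Fintype X] [Fintype Y] {W : X → Y → ℝ} {P P' : X → ℝ}

def IsCapacityAchieving (W : X → Y → ℝ) (P : X → ℝ) : Prop :=
  IsDist P ∧ ∀ P' : X → ℝ, IsDist P' → mutInfo P' W ≤ mutInfo P W

namespace IsCapacityAchieving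

lemma mutInfo_add_relEnt_mix_le (hW : ∀ x, IsDist (W x)) (hP : IsCapacityAchieving W P)
    (hP' : IsDist P') {t : ℝ} (ht₀ : 0 < t) (ht₁ : t < 1) :
    mutInfo P' W + relEnt (outDist P' W) ((1 - t) • outDist P W + t • outDist P' W)
      ≤ mutInfo P W := by
  have hW' : ∀ x y, 0 ≤ W x y := fun x => (hW x).1
  set Pt := (1 - t) • P + t • P'
  have hPt : IsDist Pt := hP.1.mix hP' (by linarith) ht₀.le (by ring)
  rw [← outDist_smul_add_smul]
  have hPPt : ∀ x, P x ≠ 0 → Pt x ≠ 0 := fun x hx => by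
    have := mul_pos (sub_pos.2 ht₁) ((hP.1.1 x).lt_of_ne' hx)
    have := mul_nonneg ht₀.le (hP'.1 x)
    simp only [Pt, Pi.add_apply, Pi.smul_apply, smul_eq_mul]
    positivity
  have hP'Pt : ∀ x, P' x ≠ 0 → Pt x ≠ 0 := fun x hx => by
    have := mul_nonneg (sub_pos.2 ht₁).le (hP.1.1 x)
    have := mul_pos ht₀ ((hP'.1 x).lt_of_ne' hx)
    simp only [Pt, Pi.add_apply, Pi.smul_apply, smul_eq_mul]
    positivity
  have hmix := sum_mul_relEnt_outDist hPt.1 hPt.1 hW' fun _ h => h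
  have hfst := sum_mul_relEnt_outDist hP.1.1 hPt.1 hW' hPPt
  have hsnd := sum_mul_relEnt_outDist hP'.1 hPt.1 hW' hP'Pt
  have hsplit : ∑ x, Pt x * relEnt (W x) (outDist Pt W)
      = (1 - t) * ∑ x, P x * relEnt (W x) (outDist Pt W)
        + t * ∑ x, P' x * relEnt (W x) (outDist Pt W) := by
    simp [Pt, add_mul, Finset.sum_add_distrib, Finset.mul_sum, mul_assoc]
  have hgibbs : 0 ≤ relEnt (outDist P W) (outDist Pt W) :=
    relEnt_nonneg (hP.1.outDist hW) (hPt.outDist hW) fun y =>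
      outDist_ne_zero_of_support hPt.1 hW' hPPt
  rw [relEnt_self, add_zero] at hmix
  rw [hmix, hfst, hsnd] at hsplit
  have hscaled : t * (mutInfo P' W + relEnt (outDist P' W) (outDist Pt W)) ≤ t * mutInfo P W := by
    linarith [hP.2 Pt hPt, mul_nonneg (sub_pos.2 ht₁).le hgibbs]
  exact le_of_mul_le_mul_left hscaled ht₀

theorem mutInfo_add_relEnt_le (hW : ∀ x, IsDist (W x)) (hP : IsCapacityAchieving W P)
    (hP' : IsDist P') : mutInfo P' W + relEnt (outDist P' W) (outDist P W) ≤ mutInfo P W := by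
  set Q := outDist P W
  set Q' := outDist P' W
  have hmix : ∀ᶠ t in 𝓝[>] (0 : ℝ),
      mutInfo P' W + relEnt Q' ((1 - t) • Q + t • Q') ≤ mutInfo P W := by
    filter_upwards [Ioo_mem_nhdsGT one_pos] with t ht
    exact hP.mutInfo_add_relEnt_mix_le hW hP' ht.1 ht.2
  by_cases hQ'Q : ∀ y, Q' y ≠ 0 → Q y ≠ 0
  · have hlim := ((continuousAt_relEnt_mix hQ'Q).tendsto.mono_left
      (nhdsWithin_le_nhds (s := Set.Ioi 0))).const_add (mutInfo P' W)
    simpa using le_of_tendsto hlim hmix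
  · push Not at hQ'Q
    obtain ⟨y, hQ'y, hQy⟩ := hQ'Q
    have hQ'y : 0 < Q' y := ((hP'.outDist hW).1 y).lt_of_ne' hQ'y
    have hblow : Tendsto (fun t => -(Q' y * (1 + log t))) (𝓝[>] 0) atTop :=
      tendsto_neg_atBot_atTop.comp
        ((tendsto_atBot_add_const_left _ 1 tendsto_log_nhdsGT_zero).const_mul_atBot hQ'y)
    have hfalse : ∀ᶠ t in 𝓝[>] (0 : ℝ), False := by
      filter_upwards [hmix, Ioo_mem_nhdsGT one_pos,
        hblow.eventually_gt_atTop (mutInfo P W - mutInfo P' W)] with t hmix ht hbig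
      have := neg_mul_one_add_log_le_relEnt_mix (hP.1.outDist hW) (hP'.outDist hW) hQy ht.1 ht.2.le
      linarith
    obtain ⟨_, h⟩ := hfalse.exists
    exact h.elim

lemma relEnt_le (hW : ∀ x, IsDist (W x)) (hP : IsCapacityAchieving W P) (x : X) :
    relEnt (W x) (outDist P W) ≤ mutInfo P W := by
  classical
  have hδ : IsDist (Pi.single x (1 : ℝ)) := ⟨fun a => by by_cases h : a = x <;> simp [h], by simp⟩
  have hout : outDist (Pi.single x 1) W = W x := by
    ext y
    simp [outDist, Pi.single_apply]
  have hI : mutInfo (Pi.single x 1) W = 0 := by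
    simp [mutInfo, hout, Pi.single_apply]
  simpa [hI, hout] using hP.mutInfo_add_relEnt_le hW hδ

lemma relEnt_eq (hW : ∀ x, IsDist (W x)) (hP : IsCapacityAchieving W P) {x : X}
    (hx : P x ≠ 0) : relEnt (W x) (outDist P W) = mutInfo P W := by
  have hgap : ∀ x ∈ Finset.univ, 0 ≤ P x * (mutInfo P W - relEnt (W x) (outDist P W)) :=
    fun x _ => mul_nonneg (hP.1.1 x) (sub_nonneg.2 (hP.relEnt_le hW x))
  have hsum : ∑ x, P x * (mutInfo P W - relEnt (W x) (outDist P W)) = 0 := by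
    have := sum_mul_relEnt_outDist hP.1.1 hP.1.1 (fun x => (hW x).1) fun _ h => h
    simp [mul_sub, Finset.sum_sub_distrib, ← Finset.sum_mul, hP.1.2, this, relEnt_self]
  have := (Finset.sum_eq_zero_iff_of_nonneg hgap).1 hsum x (Finset.mem_univ x)
  simpa [hx, sub_eq_zero, eq_comm] using this

end IsCapacityAchieving

end Capacity

theorem statement4 {X Y : Type*} [Fintype X] [Fintype Y]
    (W : X → Y → ℝ) (hW : ∀ x, IsDist (W x))
    (Pstar : X → ℝ) (hPstar : IsDist Pstar)
    (C : ℝ) (hC : C = mutInfo Pstar W)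
    (hcap : ∀ P : X → ℝ, IsDist P → mutInfo P W ≤ C)
    (P' : X → ℝ) (hP' : IsDist P') :
    mutInfo P' W ≤ C - relEnt (outDist P' W) (outDist Pstar W) ∧
      ((∀ x, P' x ≠ 0 → Pstar x ≠ 0) →
        mutInfo P' W = C - relEnt (outDist P' W) (outDist Pstar W)) := by
  subst hC
  have hPstar : IsCapacityAchieving W Pstar := ⟨hPstar, hcap⟩
  refine ⟨le_sub_iff_add_le.2 (hPstar.mutInfo_add_relEnt_le hW hP'), fun hsupp => ?_⟩
  have havg : ∑ x, P' x * relEnt (W x) (outDist Pstar W) = mutInfo Pstar W := by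
    rw [← one_mul (mutInfo Pstar W), ← hP'.2, Finset.sum_mul]
    refine Finset.sum_congr rfl fun x _ => ?_
    by_cases hx : P' x = 0
    · simp [hx]
    · rw [hPstar.relEnt_eq hW (hsupp x hx)]
  rw [sum_mul_relEnt_outDist hP'.1 hPstar.1.1 (fun x => (hW x).1) hsupp] at havg
  linarith
end

section
/- Let W be a DMC with finite input alphabet X containing the 'off' symbol 0 and finite output alphabet Y, with Q0 = W(·|0) having full support on Y, and suppose Q0 does not lie in the convex hull of {W(·|x) : x ≠ 0}. Let {P_n} be a sequence of input distributions with induced output distributions Q_n = P_n W satisfying D(Q_n ‖ Q0) → 0 as n → ∞. Let (X, Y) have the joint distribution induced by P_n and W. Then var( log( W(Y|X) / Q_n(Y) ) ) → 0 as n → ∞. -/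
/-!
STATEMENT 12: For a DMC `W` with full-support `Q0 = W(·|x0)` whose off symbol is not
redundant (and no two input symbols induce the same output distribution), if `{P_n}`
are input distributions with `D(P_n W ‖ Q0) → 0`, and `(X, Y)` has the joint
distribution induced by `P_n` and `W`, then `var(log(W(Y|X)/Q_n(Y))) → 0`.
-/

open Filter
open scoped BigOperators Topology

/-- Expectation of `f(X,Y)` under the joint distribution `P(x) W(y|x)` on `X × Y`. -/
noncomputable def jointExp {X Y : Type*} [Fintype X] [Fintype Y]
    (P : X → ℝ) (W : X → Y → ℝ) (f : X → Y → ℝ) : ℝ :=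
  ∑ x, ∑ y, P x * W x y * f x y

/-- Variance of `f(X,Y)` under the joint distribution `P(x) W(y|x)` on `X × Y`. -/
noncomputable def jointVar {X Y : Type*} [Fintype X] [Fintype Y]
    (P : X → ℝ) (W : X → Y → ℝ) (f : X → Y → ℝ) : ℝ :=
  jointExp P W (fun x y => (f x y - jointExp P W f) ^ 2)

/-! ### Auxiliary lemmas -/

/-- Pointwise Gibbs bound: `a - b ≤ a log(a/b)` for `a ≥ 0`, `b > 0`. -/
lemma aux_term_ge {a b : ℝ} (ha : 0 ≤ a) (hb : 0 < b) :
    a - b ≤ a * Real.log (a / b) := by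
  rcases eq_or_lt_of_le ha with h | h
  · simp [← h]; linarith
  · have h1 : Real.log (b / a) ≤ b / a - 1 := Real.log_le_sub_one_of_pos (by positivity)
    have h2 : Real.log (b / a) = - Real.log (a / b) := by
      rw [← Real.log_inv]; congr 1; rw [inv_div]
    rw [h2] at h1
    have h3 := mul_le_mul_of_nonneg_left h1 h.le
    rw [mul_neg] at h3
    have h4 : a * (b / a - 1) = b - a := by field_simp
    linarith

/-- Strict pointwise Gibbs bound when `a ≠ b`. -/
lemma aux_term_gt {a b : ℝ} (ha : 0 ≤ a) (hb : 0 < b) (hne : a ≠ b) :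
    a - b < a * Real.log (a / b) := by
  rcases eq_or_lt_of_le ha with h | h
  · simp [← h]; linarith
  · have hne' : b / a ≠ 1 := by
      intro hc
      exact hne (by field_simp at hc; linarith)
    have h1 : Real.log (b / a) < b / a - 1 := Real.log_lt_sub_one_of_pos (by positivity) hne'
    have h2 : Real.log (b / a) = - Real.log (a / b) := by
      rw [← Real.log_inv]; congr 1; rw [inv_div]
    rw [h2] at h1
    have h3 := (mul_lt_mul_iff_right₀ h).mpr h1
    rw [mul_neg] at h3
    have h4 : a * (b / a - 1) = b - a := by field_simp
    linarith

/-- Gibbs: relative entropy is strictly positive for distinct distributions. -/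
lemma relEnt_pos {α : Type*} [Fintype α] {p q : α → ℝ} (hp : IsDist p)
    (hq : ∀ a, 0 < q a) (hq1 : ∑ a, q a = 1) (hne : p ≠ q) :
    0 < relEnt p q := by
  obtain ⟨a0, ha0⟩ : ∃ a0, p a0 ≠ q a0 := by
    by_contra hc
    push_neg at hc
    exact hne (funext hc)
  have key : ∑ a, (p a - q a) < ∑ a, p a * Real.log (p a / q a) := by
    apply Finset.sum_lt_sum (fun a _ => aux_term_ge (hp.1 a) (hq a))
    exact ⟨a0, Finset.mem_univ a0, aux_term_gt (hp.1 a0) (hq a0) ha0⟩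
  have hz : ∑ a, (p a - q a) = 0 := by
    rw [Finset.sum_sub_distrib, hp.2, hq1, sub_self]
  unfold relEnt
  linarith

/-- Rewriting relEnt so continuity is obvious. -/
lemma relEnt_eq {α : Type*} [Fintype α] {q : α → ℝ} (hq : ∀ a, q a ≠ 0) (p : α → ℝ) :
    relEnt p q = ∑ a, (p a * Real.log (p a) - p a * Real.log (q a)) := by
  unfold relEnt
  apply Finset.sum_congr rfl
  intro a _
  rcases eq_or_ne (p a) 0 with h | h
  · simp [h]
  · rw [Real.log_div h (hq a)]; ring

lemma relEnt_continuous {α : Type*} [Fintype α] {q : α → ℝ} (hq : ∀ a, q a ≠ 0) :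
    Continuous (fun p : α → ℝ => relEnt p q) := by
  have : (fun p : α → ℝ => relEnt p q)
      = fun p => ∑ a, (p a * Real.log (p a) - p a * Real.log (q a)) :=
    funext (relEnt_eq hq)
  rw [this]
  exact continuous_finset_sum _ fun a _ =>
    (Real.continuous_mul_log.comp (continuous_apply a)).sub
      ((continuous_apply a).mul continuous_const)

/-- The simplex of distributions on a finite type is compact. -/
lemma isCompact_simplex (α : Type*) [Fintype α] :
    IsCompact {p : α → ℝ | IsDist p} := by
  have hclosed : IsClosed {p : α → ℝ | IsDist p} := by
    have : {p : α → ℝ | IsDist p}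
        = (⋂ a, {p : α → ℝ | 0 ≤ p a}) ∩ {p : α → ℝ | ∑ a, p a = 1} := by
      ext p
      simp [IsDist, Set.mem_iInter]
    rw [this]
    exact ((isClosed_iInter fun a =>
      isClosed_le continuous_const (continuous_apply a))).inter
      (isClosed_eq (continuous_finset_sum _ fun a _ => continuous_apply a) continuous_const)
  have hsub : {p : α → ℝ | IsDist p} ⊆ Set.Icc (0 : α → ℝ) 1 := by
    intro p hp
    constructor
    · intro a; exact hp.1 a
    · intro a
      have := Finset.single_le_sum (fun b _ => hp.1 b) (Finset.mem_univ a)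
      rw [hp.2] at this
      exact this
  exact IsCompact.of_isClosed_subset isCompact_Icc hclosed hsub

/-- Generic compactness lemma: if `F` is continuous, vanishes (within `K`) only at `q0`,
and `F (u n) → 0` with `u n ∈ K` compact, then `u n → q0`. -/
lemma tendsto_of_F_tendsto_zero {E : Type*} [MetricSpace E] {K : Set E} (hK : IsCompact K)
    {F : E → ℝ} (hF : Continuous F) {q0 : E}
    (hpos : ∀ p ∈ K, p ≠ q0 → 0 < F p)
    {u : ℕ → E} (hu : ∀ n, u n ∈ K)
    (hFu : Tendsto (fun n => F (u n)) atTop (nhds 0)) :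
    Tendsto u atTop (nhds q0) := by
  rw [Metric.tendsto_atTop]
  intro ε hε
  set K' := K ∩ {p | ε ≤ dist p q0} with hK'def
  have hK'cl : IsClosed {p : E | ε ≤ dist p q0} :=
    isClosed_le continuous_const (continuous_id.dist continuous_const)
  have hK' : IsCompact K' := hK.inter_right hK'cl
  rcases K'.eq_empty_or_nonempty with hemp | hne
  · refine ⟨0, fun n _ => ?_⟩
    by_contra hc
    push_neg at hc
    have : u n ∈ K' := ⟨hu n, hc⟩
    rw [hemp] at this
    exact this
  · obtain ⟨p₀, hp₀K', hmin⟩ := hK'.exists_isMinOn hne hF.continuousOn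
    have hp₀ne : p₀ ≠ q0 := by
      intro hc
      have : ε ≤ dist p₀ q0 := hp₀K'.2
      rw [hc, dist_self] at this
      linarith
    have hm : 0 < F p₀ := hpos p₀ hp₀K'.1 hp₀ne
    have hev : ∀ᶠ n in atTop, F (u n) < F p₀ :=
      hFu (Iio_mem_nhds hm)
    obtain ⟨N, hN⟩ := hev.exists_forall_of_atTop
    refine ⟨N, fun n hn => ?_⟩
    by_contra hc
    push_neg at hc
    have hmem : u n ∈ K' := ⟨hu n, hc⟩
    have := hmin hmem
    simp only [Set.mem_setOf_eq] at this
    have := hN n hn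
    exact absurd (hmin hmem) (by simpa using not_le.mpr (hN n hn))

/-- The output distribution is a distribution. -/
lemma outDist_isDist {X Y : Type*} [Fintype X] [Fintype Y]
    {P : X → ℝ} {W : X → Y → ℝ} (hP : IsDist P) (hW : ∀ x, IsDist (W x)) :
    IsDist (outDist P W) := by
  constructor
  · intro y
    exact Finset.sum_nonneg fun x _ => mul_nonneg (hP.1 x) ((hW x).1 y)
  · have h0 : ∑ y, outDist P W y = ∑ y, ∑ x, P x * W x y := rfl
    rw [h0, Finset.sum_comm]
    calc ∑ x, ∑ y, P x * W x y = ∑ x, P x * ∑ y, W x y := by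
          simp [Finset.mul_sum]
      _ = 1 := by simp only [(fun x => (hW x).2 : ∀ x, ∑ y, W x y = 1), mul_one, hP.2]

/-- If the output distribution equals `W x0` and `W x0` is not in the convex hull
of the other rows, then `P` is the point mass on `x0`. -/
lemma outDist_eq_imp {X Y : Type*} [Fintype X] [Fintype Y] [DecidableEq X]
    (W : X → Y → ℝ) (x0 : X)
    (hnotred : W x0 ∉ convexHull ℝ (W '' {x : X | x ≠ x0}))
    {P : X → ℝ} (hP : IsDist P) (h : outDist P W = W x0) :
    P = fun x => if x = x0 then 1 else 0 := by
  have hle : P x0 ≤ 1 := by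
    have := Finset.single_le_sum (fun b _ => hP.1 b) (Finset.mem_univ x0)
    rw [hP.2] at this; exact this
  rcases eq_or_lt_of_le hle with h1 | h1
  · -- P x0 = 1 forces all other masses to 0
    have hrest : ∑ x ∈ Finset.univ.erase x0, P x = 0 := by
      rw [Finset.sum_erase_eq_sub (Finset.mem_univ x0), hP.2, ← h1, sub_self]
    have hzero : ∀ x ∈ Finset.univ.erase x0, P x = 0 := by
      intro x hx
      exact (Finset.sum_eq_zero_iff_of_nonneg fun b _ => hP.1 b).mp hrest x hx
    funext x
    by_cases hx : x = x0
    · simp [hx, ← h1]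
    · simp only [hx, if_false]
      exact hzero x (Finset.mem_erase.mpr ⟨hx, Finset.mem_univ x⟩)
  · exfalso
    apply hnotred
    set s := Finset.univ.erase x0 with hs
    have hw : ∀ x ∈ s, 0 ≤ P x := fun x _ => hP.1 x
    have hsum_s : ∑ x ∈ s, P x = 1 - P x0 := by
      rw [hs, Finset.sum_erase_eq_sub (Finset.mem_univ x0), hP.2]
    have hposum : 0 < ∑ x ∈ s, P x := by rw [hsum_s]; linarith
    have hz : ∀ x ∈ s, W x ∈ W '' {x : X | x ≠ x0} := by
      intro x hx
      exact ⟨x, (Finset.mem_erase.mp hx).1, rfl⟩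
    have hmem := Finset.centerMass_mem_convexHull s hw hposum hz
    have hkey : ∑ x ∈ s, P x • W x = (1 - P x0) • W x0 := by
      funext y
      have hy : ∑ x, P x * W x y = W x0 y := congrFun h y
      simp only [Finset.sum_apply, Pi.smul_apply, smul_eq_mul]
      rw [hs, Finset.sum_erase_eq_sub (Finset.mem_univ x0), hy]
      ring
    have hcm : s.centerMass P W = W x0 := by
      rw [Finset.centerMass, hkey, hsum_s, smul_smul,
        inv_mul_cancel₀ (by linarith : (1:ℝ) - P x0 ≠ 0), one_smul]
    rwa [hcm] at hmem

/-- Variance is bounded by the second moment (when total mass is 1). -/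
lemma jointVar_le_sq {X Y : Type*} [Fintype X] [Fintype Y]
    {P : X → ℝ} {W : X → Y → ℝ} (hmass : ∑ x, ∑ y, P x * W x y = 1)
    (f : X → Y → ℝ) :
    jointVar P W f ≤ jointExp P W (fun x y => f x y ^ 2) := by
  have hprod : ∀ g : X → Y → ℝ,
      jointExp P W g = ∑ p : X × Y, P p.1 * W p.1 p.2 * g p.1 p.2 := by
    intro g
    rw [jointExp, Fintype.sum_prod_type]
  set μ := jointExp P W f with hμ
  have hmass' : ∑ p : X × Y, P p.1 * W p.1 p.2 = 1 := by
    rw [Fintype.sum_prod_type]; exact hmass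
  have hEf : ∑ p : X × Y, P p.1 * W p.1 p.2 * f p.1 p.2 = μ := (hprod f).symm
  have h0 : jointVar P W f = jointExp P W (fun x y => (f x y - μ) ^ 2) := rfl
  have expand : jointVar P W f
      = (∑ p : X × Y, P p.1 * W p.1 p.2 * f p.1 p.2 ^ 2) - 2*μ*μ + μ^2 * 1 := by
    rw [h0, hprod]
    calc ∑ p : X × Y, P p.1 * W p.1 p.2 * (f p.1 p.2 - μ) ^ 2
        = ∑ p : X × Y, (P p.1 * W p.1 p.2 * f p.1 p.2 ^ 2
            - 2*μ*(P p.1 * W p.1 p.2 * f p.1 p.2) + μ^2*(P p.1 * W p.1 p.2)) :=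
          Finset.sum_congr rfl (fun p _ => by ring)
      _ = (∑ p : X × Y, P p.1 * W p.1 p.2 * f p.1 p.2 ^ 2)
            - (∑ p : X × Y, 2*μ*(P p.1 * W p.1 p.2 * f p.1 p.2))
            + (∑ p : X × Y, μ^2*(P p.1 * W p.1 p.2)) := by
          rw [Finset.sum_add_distrib, Finset.sum_sub_distrib]
      _ = (∑ p : X × Y, P p.1 * W p.1 p.2 * f p.1 p.2 ^ 2) - 2*μ*μ + μ^2 * 1 := by
          rw [← Finset.mul_sum, ← Finset.mul_sum, hEf, hmass']
  rw [expand, hprod]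
  nlinarith [sq_nonneg μ]

theorem statement12 {X Y : Type*} [Fintype X] [Fintype Y]
    (W : X → Y → ℝ) (x0 : X) (hW : ∀ x, IsDist (W x)) (hsupp : ∀ y, 0 < W x0 y)
    (hinj : Function.Injective W)
    (hnotred : W x0 ∉ convexHull ℝ (W '' {x : X | x ≠ x0}))
    (P : ℕ → X → ℝ) (hP : ∀ n, IsDist (P n))
    (hD : Tendsto (fun n => relEnt (outDist (P n) W) (W x0)) atTop (nhds 0)) :
    Tendsto (fun n => jointVar (P n) W
        (fun x y => Real.log (W x y / outDist (P n) W y))) atTop (nhds 0) := by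
  classical
  set Q : ℕ → Y → ℝ := fun n => outDist (P n) W with hQ
  -- Step 1 : Q n → W x0
  have hQn_dist : ∀ n, IsDist (Q n) := fun n => outDist_isDist (hP n) hW
  have hQtendsto : Tendsto Q atTop (nhds (W x0)) := by
    apply tendsto_of_F_tendsto_zero (isCompact_simplex Y)
      (relEnt_continuous (fun y => (hsupp y).ne'))
      (fun p hp hne => relEnt_pos hp hsupp (hW x0).2 hne)
      (fun n => hQn_dist n) hD
  have hQy : ∀ y, Tendsto (fun n => Q n y) atTop (nhds (W x0 y)) :=
    fun y => tendsto_pi_nhds.mp hQtendsto y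
  -- Step 2 : P n → point mass at x0
  set δ : X → ℝ := fun x => if x = x0 then 1 else 0 with hδ
  have hout_cont : Continuous (fun p : X → ℝ => outDist p W) := by
    unfold outDist
    exact continuous_pi fun y => continuous_finset_sum _ fun x _ =>
      (continuous_apply x).mul continuous_const
  have hPtendsto : Tendsto P atTop (nhds δ) := by
    refine tendsto_of_F_tendsto_zero (isCompact_simplex X)
      (F := fun p => dist (outDist p W) (W x0))
      (hout_cont.dist continuous_const)
      (fun p hp hne => ?_) (fun n => hP n)
      (tendsto_iff_dist_tendsto_zero.mp hQtendsto)
    rw [dist_pos]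
    intro hc
    exact hne (outDist_eq_imp W x0 hnotred hp hc)
  have hPx : ∀ x, Tendsto (fun n => P n x) atTop (nhds (δ x)) :=
    fun x => tendsto_pi_nhds.mp hPtendsto x
  -- Step 3 : second moment tends to zero
  have hE : Tendsto (fun n => jointExp (P n) W
      (fun x y => Real.log (W x y / Q n y) ^ 2)) atTop (nhds 0) := by
    have : ∀ x y, Tendsto (fun n => P n x * W x y * Real.log (W x y / Q n y) ^ 2)
        atTop (nhds 0) := by
      intro x y
      rcases eq_or_lt_of_le ((hW x).1 y) with hw0 | hw0
      · simp only [← hw0, mul_zero, zero_mul]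
        exact tendsto_const_nhds
      · have hlog : Tendsto (fun n => Real.log (W x y / Q n y)) atTop
            (nhds (Real.log (W x y / W x0 y))) := by
          have hdiv : Tendsto (fun n => W x y / Q n y) atTop
              (nhds (W x y / W x0 y)) :=
            tendsto_const_nhds.div (hQy y) (hsupp y).ne'
          exact (Real.continuousAt_log (div_pos hw0 (hsupp y)).ne').tendsto.comp hdiv
        have := ((hPx x).mul
          (tendsto_const_nhds : Tendsto (fun _ : ℕ => W x y) atTop (nhds (W x y)))).mul
          (hlog.pow 2)
        have hlim : δ x * W x y * Real.log (W x y / W x0 y) ^ 2 = 0 := by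
          by_cases hx : x = x0
          · subst hx
            rw [div_self (hsupp y).ne', Real.log_one]
            ring
          · simp [hδ, hx]
        rwa [hlim] at this
    have hsum := tendsto_finset_sum (Finset.univ : Finset X) fun x _ =>
      tendsto_finset_sum (Finset.univ : Finset Y) fun y _ => this x y
    simpa [jointExp, Finset.sum_const_zero] using hsum
  -- Step 4 : squeeze
  apply squeeze_zero (g := fun n => jointExp (P n) W
      (fun x y => Real.log (W x y / Q n y) ^ 2)) ?_ ?_ hE
  · intro n
    apply Finset.sum_nonneg
    intro x _
    apply Finset.sum_nonneg
    intro y _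
    exact mul_nonneg (mul_nonneg ((hP n).1 x) ((hW x).1 y)) (sq_nonneg _)
  · intro n
    have hmass : ∑ x, ∑ y, P n x * W x y = 1 := by
      calc ∑ x, ∑ y, P n x * W x y = ∑ x, P n x * ∑ y, W x y := by
            simp [Finset.mul_sum]
        _ = 1 := by simp only [fun x => (hW x).2, mul_one, (hP n).2]
    exact jointVar_le_sq hmass _
end

section
/- Let W be a DMC with finite input alphabet X containing the 'off' symbol 0 and finite output alphabet Y, with Q0 = W(·|0) having full support on Y. Let P̃ be an input distribution with P̃(0) = 0, let P0 be the point mass at 0, and for μ ∈ [0,1] set P_μ = (1−μ)P0 + μP̃. Then the right derivative at μ = 0 of μ ↦ I(P_μ, W) equals Σ_{x∈X} P̃(x) D( W(·|x) ‖ Q0 ); equivalently, I(P_μ, W) = μ · Σ_x P̃(x) D(W(·|x) ‖ Q0) + o(μ) as μ ↓ 0. -/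
/-!
Writing `q_μ = Q0 + μ (Q̃ - Q0)` for the (affine) output distribution of `P_μ`, the mutual
information splits as `I(P_μ, W) = (1 - μ) D(Q0 ‖ q_μ) + μ Σ_x P̃(x) D(W(·|x) ‖ q_μ)`.
At `μ = 0` the first term vanishes to second order: `D(Q0 ‖ Q0) = 0`, and its derivative
`-Σ_y Q0(y) (Q̃(y) - Q0(y)) / Q0(y) = -(1 - 1)` vanishes because both `Q̃` and `Q0` are
probability vectors. Only the value of the second factor at `μ = 0` survives.
-/

open Filter Asymptotics
open scoped BigOperators Topology

lemma relEnt_self_s14 {α : Type*} [Fintype α] (q : α → ℝ) : relEnt q q = 0 :=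
  Finset.sum_eq_zero fun a _ => by by_cases h : q a = 0 <;> simp [h]

lemma hasDerivAt_mul_log_div (a : ℝ) {g : ℝ → ℝ} {g' t : ℝ} (hg : HasDerivAt g g' t)
    (ht : g t ≠ 0) :
    HasDerivAt (fun s => a * Real.log (a / g s)) (-(a * g' / g t)) t := by
  by_cases ha : a = 0
  · simpa [ha] using hasDerivAt_const t (0 : ℝ)
  · have h := (((hasDerivAt_const t a).div hg ht).log (div_ne_zero ha ht)).const_mul a
    refine h.congr_deriv ?_
    simp only [Pi.div_apply]
    field_simp
    ring

lemma hasDerivAt_relEnt_add_mul {α : Type*} [Fintype α] (p q d : α → ℝ) {t : ℝ}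
    (h : ∀ a, q a + t * d a ≠ 0) :
    HasDerivAt (fun s => relEnt p fun a => q a + s * d a)
      (-∑ a, p a * d a / (q a + t * d a)) t := by
  rw [← Finset.sum_neg_distrib]
  exact HasDerivAt.fun_sum fun a _ =>
    hasDerivAt_mul_log_div (p a)
      ((((hasDerivAt_id' t).mul_const (d a)).const_add (q a)).congr_deriv (one_mul _)) (h a)

section Channel

variable {X Y : Type*} [Fintype X]

lemma mutInfo_eq_sum_relEnt [Fintype Y] (P : X → ℝ) (W : X → Y → ℝ) :
    mutInfo P W = ∑ x, P x * relEnt (W x) (outDist P W) := by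
  simp only [mutInfo, relEnt, Finset.mul_sum, mul_assoc]

lemma sum_outDist [Fintype Y] (P : X → ℝ) {W : X → Y → ℝ} (hW : ∀ x, ∑ y, W x y = 1) :
    ∑ y, outDist P W y = ∑ x, P x := by
  simp only [outDist]
  rw [Finset.sum_comm]
  simp [← Finset.mul_sum, hW]

variable [DecidableEq X]

lemma sum_mix_mul (x0 : X) (P f : X → ℝ) (μ : ℝ) :
    ∑ x, ((1 - μ) * (if x = x0 then 1 else 0) + μ * P x) * f x =
      (1 - μ) * f x0 + μ * ∑ x, P x * f x := by
  simp [add_mul, Finset.sum_add_distrib, mul_assoc, ← Finset.mul_sum]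

lemma outDist_mix (x0 : X) (P : X → ℝ) (W : X → Y → ℝ) (μ : ℝ) :
    outDist (fun x => (1 - μ) * (if x = x0 then 1 else 0) + μ * P x) W =
      fun y => W x0 y + μ * (outDist P W y - W x0 y) := by
  funext y
  rw [outDist, sum_mix_mul, outDist]
  ring

lemma mutInfo_mix [Fintype Y] (x0 : X) (P : X → ℝ) (W : X → Y → ℝ) (μ : ℝ) :
    mutInfo (fun x => (1 - μ) * (if x = x0 then 1 else 0) + μ * P x) W =
      (1 - μ) * relEnt (W x0) (fun y => W x0 y + μ * (outDist P W y - W x0 y)) +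
        μ * ∑ x, P x * relEnt (W x) (fun y => W x0 y + μ * (outDist P W y - W x0 y)) := by
  rw [mutInfo_eq_sum_relEnt, outDist_mix, sum_mix_mul]

lemma mutInfo_dirac [Fintype Y] (x0 : X) (W : X → Y → ℝ) :
    mutInfo (fun x => if x = x0 then (1 : ℝ) else 0) W = 0 := by
  simpa [relEnt_self_s14] using mutInfo_mix x0 0 W 0

theorem hasDerivAt_mutInfo_mix [Fintype Y] {W : X → Y → ℝ} {x0 : X} {P : X → ℝ}
    (hW : ∀ x, ∑ y, W x y = 1) (hQ : ∀ y, W x0 y ≠ 0) (hP : ∑ x, P x = 1) :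
    HasDerivAt (fun μ => mutInfo (fun x => (1 - μ) * (if x = x0 then 1 else 0) + μ * P x) W)
      (∑ x, P x * relEnt (W x) (W x0)) 0 := by
  set d : Y → ℝ := fun y => outDist P W y - W x0 y
  have hq : ∀ y, W x0 y + 0 * d y ≠ 0 := by simpa using hQ
  have hg := hasDerivAt_relEnt_add_mul (W x0) (W x0) d hq
  have hh := HasDerivAt.fun_sum fun x (_ : x ∈ Finset.univ) =>
    (hasDerivAt_relEnt_add_mul (W x) (W x0) d hq).const_mul (P x)
  have hf := (((hasDerivAt_id' 0).const_sub 1).mul hg).add ((hasDerivAt_id' 0).mul hh)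
  have hd : ∑ y, W x0 y * d y / W x0 y = 0 := by
    simp only [mul_div_cancel_left₀ _ (hQ _), d, Finset.sum_sub_distrib, sum_outDist P hW,
      hP, hW, sub_self]
  simp only [zero_mul, add_zero, relEnt_self_s14, hd] at hf
  rw [funext (mutInfo_mix x0 P W)]
  exact hf.congr_deriv (by simp)

end Channel

theorem statement14_general {X Y : Type*} [Fintype X] [Fintype Y] [DecidableEq X]
    (W : X → Y → ℝ) (x0 : X) (hW : ∀ x, IsDist (W x)) (hsupp : ∀ y, 0 < W x0 y)
    (Pt : X → ℝ) (hPt : IsDist Pt) :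
    HasDerivWithinAt
      (fun μ : ℝ => mutInfo (fun x => (1 - μ) * (if x = x0 then 1 else 0) + μ * Pt x) W)
      (∑ x, Pt x * relEnt (W x) (W x0)) (Set.Ici 0) 0 ∧
    (fun μ : ℝ => mutInfo (fun x => (1 - μ) * (if x = x0 then 1 else 0) + μ * Pt x) W -
        μ * ∑ x, Pt x * relEnt (W x) (W x0))
      =o[nhdsWithin 0 (Set.Ioi 0)] fun μ : ℝ => μ := by
  have hderiv := hasDerivAt_mutInfo_mix (fun x => (hW x).2) (fun y => (hsupp y).ne') hPt.2
  refine ⟨hderiv.hasDerivWithinAt, ?_⟩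
  have hlo := (hasDerivAt_iff_isLittleO_nhds_zero.mp hderiv).mono
    (nhdsWithin_le_nhds (s := Set.Ioi 0))
  simpa [mutInfo_dirac] using hlo

theorem statement14 {X Y : Type*} [Fintype X] [Fintype Y] [DecidableEq X]
    (W : X → Y → ℝ) (x0 : X) (hW : ∀ x, IsDist (W x)) (hsupp : ∀ y, 0 < W x0 y)
    (Pt : X → ℝ) (hPt : IsDist Pt) (hPt0 : Pt x0 = 0) :
    HasDerivWithinAt
      (fun μ : ℝ => mutInfo (fun x => (1 - μ) * (if x = x0 then 1 else 0) + μ * Pt x) W)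
      (∑ x, Pt x * relEnt (W x) (W x0)) (Set.Ici 0) 0 ∧
    (fun μ : ℝ => mutInfo (fun x => (1 - μ) * (if x = x0 then 1 else 0) + μ * Pt x) W -
        μ * ∑ x, Pt x * relEnt (W x) (W x0))
      =o[nhdsWithin 0 (Set.Ioi 0)] fun μ : ℝ => μ :=
  statement14_general W x0 hW hsupp Pt hPt
end

section
/- Let Y be a finite set and let Q0 and Q* be probability distributions on Y, both with full support. For λ ∈ [0,1] define Q_λ(y) = Q0(y)^{1−λ} Q*(y)^{λ} / Σ_{y'} Q0(y')^{1−λ} Q*(y')^{λ}. Then as λ ↓ 0: (i) D(Q_λ ‖ Q0) = (λ²/2) · var_{Q0}( log( Q0(Y)/Q*(Y) ) ) + o(λ²), and (ii) the derivative of λ ↦ D(Q_λ ‖ Q*) at λ = 0 equals −var_{Q0}( log( Q0(Y)/Q*(Y) ) ). -/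
/-!
`Q_λ` is the exponential tilt of `Q0` by `g = log (Q*/Q0)`: `Q_λ(y) = Q0(y) e^{λ g(y)} / Z(λ)`.
The cumulant generating function `Λ = log Z` has `Λ'(λ)` the mean and `Λ''(λ)` the variance of
`g` under `Q_λ`. Since `log (Q_λ/Q0) = λ g - Λ(λ)` and `log (Q_λ/Q*) = (λ - 1) g - Λ(λ)`,
`D(Q_λ ‖ Q0) = λ Λ'(λ) - Λ(λ)` and `D(Q_λ ‖ Q*) = (λ - 1) Λ'(λ) - Λ(λ)`, with derivatives
`λ Λ''(λ)` and `(λ - 1) Λ''(λ)`. The first vanishes at `0` together with its derivative, and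
its second derivative is continuous with value `Λ''(0) = var_{Q0}(g)`.
-/

open Filter Asymptotics
open scoped BigOperators Topology

/-- The normalized geometric mixture of two distributions. -/
noncomputable def geomMix {α : Type*} [Fintype α] (q0 qs : α → ℝ) (lam : ℝ) : α → ℝ :=
  fun a => q0 a ^ (1 - lam) * qs a ^ lam / ∑ a', q0 a' ^ (1 - lam) * qs a' ^ lam

/-- Variance of the function `f` of `Y` when `Y` has distribution `q` on a finite set. -/
noncomputable def varFin {α : Type*} [Fintype α] (q f : α → ℝ) : ℝ :=
  ∑ a, q a * (f a - ∑ a', q a' * f a') ^ 2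

open Real Finset

section Tilt

variable {Y : Type*} [Fintype Y]

noncomputable def expMoment (q f : Y → ℝ) (k : ℕ) (t : ℝ) : ℝ :=
  ∑ y, q y * f y ^ k * exp (t * f y)

noncomputable def tilt (q f : Y → ℝ) (t : ℝ) : Y → ℝ :=
  fun y => q y * exp (t * f y) / expMoment q f 0 t

noncomputable def tiltMean (q f : Y → ℝ) (t : ℝ) : ℝ :=
  expMoment q f 1 t / expMoment q f 0 t

lemma varFin_eq_sum_sub_sq {p : Y → ℝ} (hp : ∑ y, p y = 1) (f : Y → ℝ) :
    varFin p f = ∑ y, p y * f y ^ 2 - (∑ y, p y * f y) ^ 2 := by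
  set μ := ∑ y, p y * f y
  have expand : ∀ y, p y * (f y - μ) ^ 2 = p y * f y ^ 2 - 2 * μ * (p y * f y) + μ ^ 2 * p y :=
    fun y => by ring
  rw [varFin, sum_congr rfl fun y _ => expand y, sum_add_distrib, sum_sub_distrib,
    ← mul_sum, ← mul_sum, hp]
  ring

lemma varFin_neg (p f : Y → ℝ) : varFin p (fun y => -f y) = varFin p f := by
  simp only [varFin, mul_neg, sum_neg_distrib]
  exact sum_congr rfl fun y _ => by ring

variable (q f : Y → ℝ)

lemma hasDerivAt_expMoment (k : ℕ) (t : ℝ) :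
    HasDerivAt (expMoment q f k) (expMoment q f (k + 1) t) t := by
  have hterm : ∀ y, HasDerivAt (fun s => q y * f y ^ k * exp (s * f y))
      (q y * f y ^ (k + 1) * exp (t * f y)) t := fun y =>
    (((hasDerivAt_id t).mul_const (f y)).exp.const_mul (q y * f y ^ k)).congr_deriv
      (by simp only [id_eq, one_mul]; ring)
  exact HasDerivAt.fun_sum fun y _ => hterm y

lemma continuous_expMoment (k : ℕ) : Continuous (expMoment q f k) :=
  continuous_iff_continuousAt.2 fun t => (hasDerivAt_expMoment q f k t).continuousAt

lemma expMoment_zero_pos [Nonempty Y] (hq : ∀ y, 0 < q y) (t : ℝ) : 0 < expMoment q f 0 t :=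
  sum_pos (fun y _ => by simpa using mul_pos (hq y) (exp_pos (t * f y))) univ_nonempty

lemma sum_tilt_mul_pow (t : ℝ) (k : ℕ) :
    ∑ y, tilt q f t y * f y ^ k = expMoment q f k t / expMoment q f 0 t := by
  rw [expMoment, sum_div]
  exact sum_congr rfl fun y _ => by rw [tilt]; ring

lemma sum_tilt {t : ℝ} (hZ : expMoment q f 0 t ≠ 0) : ∑ y, tilt q f t y = 1 := by
  simpa [div_self hZ] using sum_tilt_mul_pow q f t 0

lemma tilt_zero (hq : ∑ y, q y = 1) : tilt q f 0 = q := by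
  funext y
  simp [tilt, expMoment, hq]

lemma varFin_tilt {t : ℝ} (hZ : expMoment q f 0 t ≠ 0) :
    varFin (tilt q f t) f = expMoment q f 2 t / expMoment q f 0 t - tiltMean q f t ^ 2 := by
  rw [varFin_eq_sum_sub_sq (sum_tilt q f hZ), sum_tilt_mul_pow q f t 2, tiltMean,
    ← sum_tilt_mul_pow q f t 1]
  simp only [pow_one]

variable [Nonempty Y]

lemma continuous_varFin_tilt (hq : ∀ y, 0 < q y) : Continuous fun t => varFin (tilt q f t) f := by
  have hZ : ∀ t, expMoment q f 0 t ≠ 0 := fun t => (expMoment_zero_pos q f hq t).ne'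
  simp only [varFin_tilt q f (hZ _), tiltMean]
  have := continuous_expMoment q f
  exact ((this 2).div (this 0) hZ).sub (((this 1).div (this 0) hZ).pow 2)

lemma hasDerivAt_log_expMoment_zero (hq : ∀ y, 0 < q y) (t : ℝ) :
    HasDerivAt (fun s => log (expMoment q f 0 s)) (tiltMean q f t) t :=
  (hasDerivAt_expMoment q f 0 t).log (expMoment_zero_pos q f hq t).ne'

lemma hasDerivAt_tiltMean (hq : ∀ y, 0 < q y) (t : ℝ) :
    HasDerivAt (tiltMean q f) (varFin (tilt q f t) f) t := by
  have hZ := (expMoment_zero_pos q f hq t).ne'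
  rw [varFin_tilt q f hZ, tiltMean]
  exact ((hasDerivAt_expMoment q f 1 t).div (hasDerivAt_expMoment q f 0 t) hZ).congr_deriv
    (by field_simp)

end Tilt

section RelEntTilt

variable {Y : Type*} [Fintype Y] [Nonempty Y] {q : Y → ℝ}

lemma relEnt_tilt (hq : ∀ y, 0 < q y) (f r : Y → ℝ) (hr : ∀ y, r y ≠ 0) (t : ℝ) :
    relEnt (tilt q f t) r =
      ∑ y, tilt q f t y * (log (q y / r y) + t * f y) - log (expMoment q f 0 t) := by
  have hZ := (expMoment_zero_pos q f hq t).ne'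
  have hterm : ∀ y, tilt q f t y * log (tilt q f t y / r y) =
      tilt q f t y * (log (q y / r y) + t * f y) - tilt q f t y * log (expMoment q f 0 t) := by
    intro y
    have hsplit : tilt q f t y / r y = q y / r y * exp (t * f y) / expMoment q f 0 t := by
      rw [tilt]; ring
    have hqr := div_ne_zero (hq y).ne' (hr y)
    rw [hsplit, log_div (mul_ne_zero hqr (exp_ne_zero _)) hZ, log_mul hqr (exp_ne_zero _),
      log_exp]
    ring
  rw [relEnt, sum_congr rfl fun y _ => hterm y, sum_sub_distrib, ← sum_mul, sum_tilt q f hZ,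
    one_mul]

lemma hasDerivAt_relEnt_tilt_self (hq : ∀ y, 0 < q y) (f : Y → ℝ) (t : ℝ) :
    HasDerivAt (fun s => relEnt (tilt q f s) q) (t * varFin (tilt q f t) f) t := by
  have hD : ∀ s, relEnt (tilt q f s) q = s * tiltMean q f s - log (expMoment q f 0 s) := by
    intro s
    simp only [relEnt_tilt hq f q (fun y => (hq y).ne'), div_self (hq _).ne', log_one, zero_add,
      mul_left_comm _ s, ← mul_sum, tiltMean, ← sum_tilt_mul_pow, pow_one]
  simp only [hD]
  exact (((hasDerivAt_id t).mul (hasDerivAt_tiltMean q f hq t)).sub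
    (hasDerivAt_log_expMoment_zero q f hq t)).congr_deriv (by simp only [id_eq]; ring)

lemma hasDerivAt_relEnt_tilt_log_div (hq : ∀ y, 0 < q y) {r : Y → ℝ} (hr : ∀ y, 0 < r y)
    (t : ℝ) :
    HasDerivAt (fun s => relEnt (tilt q (fun y => log (r y / q y)) s) r)
      ((t - 1) * varFin (tilt q (fun y => log (r y / q y)) t) (fun y => log (r y / q y))) t := by
  set f := fun y => log (r y / q y)
  have hD : ∀ s, relEnt (tilt q f s) r = (s - 1) * tiltMean q f s - log (expMoment q f 0 s) := by
    intro s
    have hlog : ∀ y, log (q y / r y) + s * f y = (s - 1) * f y := fun y => by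
      rw [← inv_div, log_inv]; ring
    simp only [relEnt_tilt hq f r (fun y => (hr y).ne'), hlog, mul_left_comm _ (s - 1),
      ← mul_sum, tiltMean, ← sum_tilt_mul_pow, pow_one]
  simp only [hD]
  exact ((((hasDerivAt_id t).sub_const 1).mul (hasDerivAt_tiltMean q f hq t)).sub
    (hasDerivAt_log_expMoment_zero q f hq t)).congr_deriv (by simp only [id_eq]; ring)

lemma relEnt_tilt_self_sub_isLittleO (hq : ∀ y, 0 < q y) (hq1 : ∑ y, q y = 1) (f : Y → ℝ) :
    (fun t => relEnt (tilt q f t) q - t ^ 2 / 2 * varFin q f) =o[𝓝 0] fun t => t ^ 2 := by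
  have hderiv : ∀ t ∈ Set.univ, HasDerivWithinAt
      (fun t => relEnt (tilt q f t) q - t ^ 2 / 2 * varFin q f)
      (t * (varFin (tilt q f t) f - varFin q f)) Set.univ t := fun t _ =>
    (((hasDerivAt_relEnt_tilt_self hq f t).sub
      (((hasDerivAt_pow 2 t).div_const 2).mul_const _)).congr_deriv (by ring)).hasDerivWithinAt
  have hvar : (fun t => varFin (tilt q f t) f - varFin q f) =o[𝓝 0] fun _ => (1 : ℝ) := by
    rw [isLittleO_one_iff, tendsto_sub_nhds_zero_iff]
    simpa [tilt_zero q f hq1] using (continuous_varFin_tilt q f hq).tendsto 0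
  have hderiv_small : (fun t => t * (varFin (tilt q f t) f - varFin q f)) =o[𝓝[Set.univ] 0]
      fun t => (t - 0) ^ 1 := by
    simpa using (isBigO_refl (fun t : ℝ => t) _).mul_isLittleO hvar
  have := convex_univ.isLittleO_pow_succ_real (Set.mem_univ 0) hderiv hderiv_small
  simpa [tilt_zero q f hq1, relEnt] using this

end RelEntTilt

lemma geomMix_eq_tilt {Y : Type*} [Fintype Y] {Q0 Qs : Y → ℝ} (hQ0pos : ∀ y, 0 < Q0 y)
    (hQspos : ∀ y, 0 < Qs y) (lam : ℝ) :
    geomMix Q0 Qs lam = tilt Q0 (fun y => log (Qs y / Q0 y)) lam := by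
  have hpow : ∀ y, Q0 y ^ (1 - lam) * Qs y ^ lam = Q0 y * exp (lam * log (Qs y / Q0 y)) := by
    intro y
    rw [rpow_def_of_pos (hQ0pos y), rpow_def_of_pos (hQspos y), ← exp_add,
      log_div (hQspos y).ne' (hQ0pos y).ne', ← exp_log (hQ0pos y), ← exp_add, log_exp]
    ring_nf
  funext y
  simp only [geomMix, tilt, expMoment, pow_zero, mul_one, hpow]

theorem statement16_general {Y : Type*} [Fintype Y]
    (Q0 Qs : Y → ℝ) (hQ0 : IsDist Q0)
    (hQ0pos : ∀ y, 0 < Q0 y) (hQspos : ∀ y, 0 < Qs y) :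
    ((fun lam : ℝ => relEnt (geomMix Q0 Qs lam) Q0 -
        lam ^ 2 / 2 * varFin Q0 (fun y => Real.log (Q0 y / Qs y)))
      =o[nhdsWithin 0 (Set.Ioi 0)] fun lam : ℝ => lam ^ 2) ∧
    HasDerivWithinAt (fun lam : ℝ => relEnt (geomMix Q0 Qs lam) Qs)
      (-varFin Q0 (fun y => Real.log (Q0 y / Qs y))) (Set.Ici 0) 0 := by
  obtain ⟨y₀, -, -⟩ := exists_ne_zero_of_sum_ne_zero (hQ0.2.symm ▸ one_ne_zero)
  have : Nonempty Y := ⟨y₀⟩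
  have hvar : varFin Q0 (fun y => log (Q0 y / Qs y)) = varFin Q0 (fun y => log (Qs y / Q0 y)) := by
    simp only [← inv_div (Qs _), log_inv, varFin_neg]
  simp only [geomMix_eq_tilt hQ0pos hQspos, hvar]
  refine ⟨(relEnt_tilt_self_sub_isLittleO hQ0pos hQ0.2 _).mono nhdsWithin_le_nhds, ?_⟩
  simpa [tilt_zero Q0 _ hQ0.2] using
    (hasDerivAt_relEnt_tilt_log_div hQ0pos hQspos 0).hasDerivWithinAt (s := Set.Ici 0)

theorem statement16 {Y : Type*} [Fintype Y]
    (Q0 Qs : Y → ℝ) (hQ0 : IsDist Q0) (hQs : IsDist Qs)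
    (hQ0pos : ∀ y, 0 < Q0 y) (hQspos : ∀ y, 0 < Qs y) :
    ((fun lam : ℝ => relEnt (geomMix Q0 Qs lam) Q0 -
        lam ^ 2 / 2 * varFin Q0 (fun y => Real.log (Q0 y / Qs y)))
      =o[nhdsWithin 0 (Set.Ioi 0)] fun lam : ℝ => lam ^ 2) ∧
    HasDerivWithinAt (fun lam : ℝ => relEnt (geomMix Q0 Qs lam) Qs)
      (-varFin Q0 (fun y => Real.log (Q0 y / Qs y))) (Set.Ici 0) 0 :=
  statement16_general Q0 Qs hQ0 hQ0pos hQspos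
end

section
/- Let W be a DMC with finite input alphabet X containing the 'off' symbol 0 and finite output alphabet Y, with Q0 = W(·|0) having full support, capacity C, and capacity-achieving output distribution Q*. Assume D(W(·|x) ‖ Q*) = C for every x ∈ X (in particular D(Q0 ‖ Q*) = C). Let s(y) = Q0(y)( log(Q*(y)/Q0(y)) + C ), and suppose nonnegative numbers (α_x)_{x≠0} satisfy Σ_{x≠0} α_x ( W(·|x) − Q0 ) = s. Set A = Σ_{x≠0} α_x, P̃(x) = α_x/A for x ≠ 0, and Q̃ = P̃W. Then: (i) Σ_{x≠0} P̃(x) D( W(·|x) ‖ Q0 ) = (1/A) · var_{Q0}( log( Q*(Y)/Q0(Y) ) ), and (ii) (1/2) Σ_{y∈Y} (Q̃(y) − Q0(y))² / Q0(y) = (1/(2A²)) · var_{Q0}( log( Q*(Y)/Q0(Y) ) ). -/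
/-!
STATEMENT 17: For a DMC `W` with full-support `Q0 = W(·|x0)`, capacity `C` and
capacity-achieving output distribution `Q*` with `D(W(·|x) ‖ Q*) = C` for every `x`,
`s(y) = Q0(y)(log(Q*(y)/Q0(y)) + C)`, nonnegative `(α_x)_{x≠x0}` solving
`Σ_{x≠x0} α_x (W(·|x) − Q0) = s`, `A = Σ_{x≠x0} α_x`, `P̃(x) = α_x/A` for `x ≠ x0`
(`P̃(x0) = 0`), and `Q̃ = P̃W`:
(i) `Σ_{x≠x0} P̃(x) D(W(·|x) ‖ Q0) = (1/A) var_{Q0}(log(Q*(Y)/Q0(Y)))`, and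
(ii) `(1/2) Σ_y (Q̃(y) − Q0(y))²/Q0(y) = (1/(2A²)) var_{Q0}(log(Q*(Y)/Q0(Y)))`.
-/

open scoped BigOperators

theorem statement17 {X Y : Type*} [Fintype X] [Fintype Y] [DecidableEq X]
    (W : X → Y → ℝ) (x0 : X) (hW : ∀ x, IsDist (W x)) (hsupp : ∀ y, 0 < W x0 y)
    (Qs : Y → ℝ) (hQs : IsDist Qs) (hQspos : ∀ y, 0 < Qs y)
    (C : ℝ) (hKT : ∀ x, relEnt (W x) Qs = C)
    (α : X → ℝ) (hαnonneg : ∀ x, 0 ≤ α x)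
    (hsys : ∀ y, ∑ x ∈ Finset.univ.erase x0, α x * (W x y - W x0 y) =
      W x0 y * (Real.log (Qs y / W x0 y) + C))
    (A : ℝ) (hA : A = ∑ x ∈ Finset.univ.erase x0, α x) (hApos : 0 < A)
    (Pt : X → ℝ) (hPt : ∀ x, Pt x = if x = x0 then 0 else α x / A) :
    (∑ x, Pt x * relEnt (W x) (W x0) =
        A⁻¹ * varFin (W x0) (fun y => Real.log (Qs y / W x0 y))) ∧
    (2⁻¹ * ∑ y, (outDist Pt W y - W x0 y) ^ 2 / W x0 y =
        (2 * A ^ 2)⁻¹ * varFin (W x0) (fun y => Real.log (Qs y / W x0 y))) := by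
  set f : Y → ℝ := fun y => Real.log (Qs y / W x0 y) with hf
  have hfy : ∀ y, f y = Real.log (Qs y / W x0 y) := fun y => rfl
  have hQ0sum : ∑ y, W x0 y = 1 := (hW x0).2
  -- mean of f under Q0 is -C
  have hmean : ∑ y, W x0 y * f y = -C := by
    have h := hKT x0
    rw [relEnt] at h
    have h2 : ∀ y ∈ Finset.univ, W x0 y * Real.log (W x0 y / Qs y) = -(W x0 y * f y) := by
      intro y _
      rw [hfy, Real.log_div (hsupp y).ne' (hQspos y).ne',
          Real.log_div (hQspos y).ne' (hsupp y).ne']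
      ring
    rw [Finset.sum_congr rfl h2] at h
    rw [Finset.sum_neg_distrib] at h
    linarith
  -- output distribution formula
  have hout : ∀ y, outDist Pt W y = W x0 y + W x0 y * (f y + C) / A := by
    intro y
    show ∑ x, Pt x * W x y = _
    rw [← Finset.sum_erase_add _ _ (Finset.mem_univ x0), hPt x0, if_pos rfl, zero_mul, add_zero]
    have h1 : ∀ x ∈ Finset.univ.erase x0,
        Pt x * W x y = (α x * (W x y - W x0 y) + α x * W x0 y) / A := by
      intro x hx
      rw [hPt x, if_neg (Finset.ne_of_mem_erase hx)]
      field_simp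
      ring
    rw [Finset.sum_congr rfl h1, ← Finset.sum_div, Finset.sum_add_distrib, hsys y,
      ← Finset.sum_mul, ← hA, ← hfy]
    field_simp
    ring
  have hPtsum : ∑ x, Pt x = 1 := by
    rw [← Finset.sum_erase_add _ _ (Finset.mem_univ x0), hPt x0, if_pos rfl, add_zero]
    have h1 : ∀ x ∈ Finset.univ.erase x0, Pt x = α x / A := by
      intro x hx
      rw [hPt x, if_neg (Finset.ne_of_mem_erase hx)]
    rw [Finset.sum_congr rfl h1, ← Finset.sum_div, ← hA, div_self hApos.ne']
  -- variance formula
  have hvar : varFin (W x0) f = ∑ y, W x0 y * (f y + C) ^ 2 := by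
    rw [varFin, hmean]
    exact Finset.sum_congr rfl fun y _ => by ring
  have hzero : ∑ y, W x0 y * (f y + C) = 0 := by
    have h1 : ∀ y ∈ Finset.univ, W x0 y * (f y + C) = W x0 y * f y + C * W x0 y :=
      fun y _ => by ring
    rw [Finset.sum_congr rfl h1, Finset.sum_add_distrib, hmean, ← Finset.mul_sum, hQ0sum]
    ring
  have hfC : ∑ y, W x0 y * (f y + C) * f y = ∑ y, W x0 y * (f y + C) ^ 2 := by
    have h1 : ∀ y ∈ Finset.univ, W x0 y * (f y + C) ^ 2 =
        W x0 y * (f y + C) * f y + C * (W x0 y * (f y + C)) := fun y _ => by ring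
    rw [Finset.sum_congr rfl h1, Finset.sum_add_distrib, ← Finset.mul_sum, hzero]
    ring
  have hrel : ∀ x, relEnt (W x) (W x0) = C + ∑ y, W x y * f y := by
    intro x
    rw [relEnt]
    have h2 : ∀ y ∈ Finset.univ, W x y * Real.log (W x y / W x0 y)
        = W x y * Real.log (W x y / Qs y) + W x y * f y := by
      intro y _
      rcases ((hW x).1 y).eq_or_lt with h | h
      · simp [← h]
      · rw [hfy, Real.log_div h.ne' (hsupp y).ne', Real.log_div h.ne' (hQspos y).ne',
            Real.log_div (hQspos y).ne' (hsupp y).ne']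
        ring
    rw [Finset.sum_congr rfl h2, Finset.sum_add_distrib]
    have h3 := hKT x
    rw [relEnt] at h3
    rw [h3]
  have hLHS : ∑ x, Pt x * relEnt (W x) (W x0) = C + ∑ y, outDist Pt W y * f y := by
    have h1 : ∀ x ∈ Finset.univ, Pt x * relEnt (W x) (W x0)
        = Pt x * C + ∑ y, Pt x * (W x y * f y) := by
      intro x _
      rw [hrel x, mul_add, Finset.mul_sum]
    rw [Finset.sum_congr rfl h1, Finset.sum_add_distrib, ← Finset.sum_mul, hPtsum, one_mul,
      Finset.sum_comm]
    congr 1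
    refine Finset.sum_congr rfl fun y _ => ?_
    show _ = (∑ x, Pt x * W x y) * f y
    rw [Finset.sum_mul]
    exact Finset.sum_congr rfl fun x _ => by ring
  have hS : ∑ y, outDist Pt W y * f y = -C + A⁻¹ * ∑ y, W x0 y * (f y + C) ^ 2 := by
    have h1 : ∀ y ∈ Finset.univ, outDist Pt W y * f y
        = W x0 y * f y + A⁻¹ * (W x0 y * (f y + C) * f y) := by
      intro y _
      rw [hout y]
      field_simp
    rw [Finset.sum_congr rfl h1, Finset.sum_add_distrib, ← Finset.mul_sum, hmean, hfC]
  constructor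
  · rw [hLHS, hS, hvar]
    ring
  · have h2 : ∀ y ∈ Finset.univ, (outDist Pt W y - W x0 y) ^ 2 / W x0 y
        = (A ^ 2)⁻¹ * (W x0 y * (f y + C) ^ 2) := by
      intro y _
      rw [hout y]
      have h3 := (hsupp y).ne'
      field_simp
      ring
    rw [Finset.sum_congr rfl h2, ← Finset.mul_sum, hvar]
    ring
end

section
/- Let σ² > 0, let Z ~ N(0, σ²), and let X be a real random variable independent of Z with second moment E[X²] = ρ < ∞. Let Q denote the distribution of Y = X + Z and Q0 = N(0, σ²). Then D(Q ‖ Q0) ≥ ρ/(2σ²) − (1/2) log( (ρ + σ²)/σ² ). -/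
/-!
By the Donsker–Varadhan inequality, `E_Q f - log E_{Q0} e^f ≤ D(Q ‖ Q0)` for every test function
`f`; this is Gibbs' inequality for `Q` against the tilt of `Q0` by `f`. Test it with
`f x = a x²`, `a = (s - σ²) / (2σ² s)` where `s = E[Y²] = ρ + σ²` by independence and `E Z = 0`:
the tilt of `N(0, σ²)` by `f` is `N(0, s)`, `E_Q f = ρ / (2σ²)` and
`E_{Q0} e^f = (1 - 2aσ²)^(-1/2) = (s / σ²)^(1/2)`.
-/

open MeasureTheory ProbabilityTheory
open scoped ENNReal NNReal Classical

/-- Kullback–Leibler divergence (in nats, as an extended real) between two measures: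
the integral of the log-likelihood ratio if `μ ≪ ν` and the ratio is integrable,
and `⊤` otherwise. -/
noncomputable def klDivM {α : Type*} [MeasurableSpace α] (μ ν : Measure α) : EReal :=
  if μ ≪ ν ∧ Integrable (llr μ ν) μ then ((∫ x, llr μ ν x ∂μ : ℝ) : EReal) else ⊤

section
open Real

lemma integral_sub_log_integral_exp_le_integral_llr {α : Type*} [MeasurableSpace α]
    {μ ν : Measure α} [IsProbabilityMeasure μ] [SigmaFinite ν] [NeZero ν] {f : α → ℝ}
    (hμν : μ ≪ ν) (h_int : Integrable (llr μ ν) μ) (hfμ : Integrable f μ)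
    (hfν : Integrable (fun x ↦ exp (f x)) ν) :
    ∫ x, f x ∂μ - log (∫ x, exp (f x) ∂ν) ≤ ∫ x, llr μ ν x ∂μ := by
  have := isProbabilityMeasure_tilted hfν
  have hgibbs := InformationTheory.integral_llr_add_sub_measure_univ_nonneg
    (hμν.trans (absolutelyContinuous_tilted hfν)) (integrable_llr_tilted_right hμν hfμ h_int hfν)
  rw [integral_llr_tilted_right hμν hfμ hfν h_int] at hgibbs
  simp only [probReal_univ] at hgibbs
  linarith

lemma integral_exp_mul_sq_gaussianReal {v : ℝ≥0} (hv : v ≠ 0) {a : ℝ} (ha : 2 * a * v < 1) :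
    ∫ x, exp (a * x ^ 2) ∂gaussianReal 0 v = (√(1 - 2 * a * v))⁻¹ := by
  have hvpos : (0 : ℝ) < v := by positivity
  have hb : 0 < (1 - 2 * a * v) / (2 * v) := by apply div_pos <;> linarith
  have hpdf : ∀ x, gaussianPDFReal 0 v x * exp (a * x ^ 2)
      = (√(2 * π * v))⁻¹ * exp (-((1 - 2 * a * v) / (2 * v)) * x ^ 2) := by
    intro x
    rw [gaussianPDFReal, mul_assoc, ← exp_add]
    congr 2
    field_simp
    ring
  simp_rw [integral_gaussianReal_eq_integral_smul hv, smul_eq_mul, hpdf, integral_const_mul,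
    integral_gaussian]
  rw [← sqrt_inv, ← sqrt_inv, ← sqrt_mul (by positivity)]
  congr 1
  field_simp

lemma integrable_exp_mul_sq_gaussianReal {v : ℝ≥0} (hv : v ≠ 0) {a : ℝ} (ha : 2 * a * v < 1) :
    Integrable (fun x ↦ exp (a * x ^ 2)) (gaussianReal 0 v) := by
  refine Integrable.of_integral_ne_zero ?_
  rw [integral_exp_mul_sq_gaussianReal hv ha]
  have : 0 < 1 - 2 * a * v := by linarith
  positivity

lemma ProbabilityTheory.IndepFun.integral_add_sq {Ω : Type*} [MeasurableSpace Ω] {μ : Measure Ω}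
    [IsProbabilityMeasure μ] {X Z : Ω → ℝ} (h : IndepFun X Z μ) (hX : MemLp X 2 μ)
    (hZ : MemLp Z 2 μ) (hZ0 : μ[Z] = 0) :
    ∫ ω, (X ω + Z ω) ^ 2 ∂μ = ∫ ω, X ω ^ 2 ∂μ + Var[Z; μ] := by
  have hvar := h.variance_add hX hZ
  rw [variance_eq_sub (hX.add hZ), variance_eq_sub hX] at hvar
  simp only [Pi.pow_apply, Pi.add_apply] at hvar
  rw [integral_add (hX.integrable one_le_two) (hZ.integrable one_le_two), hZ0] at hvar
  linarith

lemma sub_div_sub_log_le_integral_llr_gaussianReal {Q : Measure ℝ} [IsProbabilityMeasure Q]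
    {v : ℝ≥0} (hv : v ≠ 0) (hQ : Q ≪ gaussianReal 0 v)
    (h_int : Integrable (llr Q (gaussianReal 0 v)) Q) (hQ2 : Integrable (fun x ↦ x ^ 2) Q)
    {s : ℝ} (hs : ∫ x, x ^ 2 ∂Q = s) (hs_pos : 0 < s) :
    (s - v) / (2 * v) - log (s / v) / 2 ≤ ∫ x, llr Q (gaussianReal 0 v) x ∂Q := by
  have hvpos : (0 : ℝ) < v := by positivity
  set a := (s - v) / (2 * v * s) with ha_def
  have ha : 1 - 2 * a * v = v / s := by rw [ha_def]; field_simp; ring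
  have ha_lt : 2 * a * v < 1 := by
    have : 0 < (v : ℝ) / s := by positivity
    linarith
  have hdv := integral_sub_log_integral_exp_le_integral_llr hQ h_int (hQ2.const_mul a)
    (integrable_exp_mul_sq_gaussianReal hv ha_lt)
  rw [integral_const_mul, hs, integral_exp_mul_sq_gaussianReal hv ha_lt, ha, log_inv,
    log_sqrt (by positivity), log_div hvpos.ne' hs_pos.ne'] at hdv
  rw [log_div hs_pos.ne' hvpos.ne']
  have : a * s = (s - v) / (2 * v) := by rw [ha_def]; field_simp
  linarith

end

theorem statement18 {Ω : Type*} [MeasurableSpace Ω] (μ : Measure Ω) [IsProbabilityMeasure μ]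
    (v : ℝ≥0) (hv : 0 < v)
    (X Z : Ω → ℝ) (hX : Measurable X) (hZ : Measurable Z)
    (hindep : IndepFun X Z μ)
    (hZlaw : Measure.map Z μ = gaussianReal 0 v)
    (ρ : ℝ) (hXmoment : ∫ ω, (X ω) ^ 2 ∂μ = ρ)
    (hXint : Integrable (fun ω => (X ω) ^ 2) μ) :
    ((ρ / (2 * (v : ℝ)) - Real.log ((ρ + (v : ℝ)) / (v : ℝ)) / 2 : ℝ) : EReal) ≤
      klDivM (Measure.map (fun ω => X ω + Z ω) μ) (gaussianReal 0 v) := by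
  have hZ_law : HasLaw Z (gaussianReal 0 v) μ := ⟨hZ.aemeasurable, hZlaw⟩
  have hX2 : MemLp X 2 μ := (memLp_two_iff_integrable_sq hX.aestronglyMeasurable).2 hXint
  have hZ2 : MemLp Z 2 μ :=
    (memLp_map_measure_iff aestronglyMeasurable_id hZ.aemeasurable).1
      (hZlaw ▸ memLp_id_gaussianReal 2)
  have hZ_mean : μ[Z] = 0 := by rw [hZ_law.integral_eq, integral_id_gaussianReal]
  have hY : Measurable fun ω ↦ X ω + Z ω := hX.add hZ
  have hY2 : Integrable (fun x ↦ x ^ 2) (μ.map fun ω ↦ X ω + Z ω) :=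
    (integrable_map_measure (by fun_prop) hY.aemeasurable).2 (hX2.add hZ2).integrable_sq
  have hY_moment : ∫ x, x ^ 2 ∂(μ.map fun ω ↦ X ω + Z ω) = ρ + v := by
    rw [integral_map hY.aemeasurable (by fun_prop), hindep.integral_add_sq hX2 hZ2 hZ_mean,
      hZ_law.variance_eq, variance_id_gaussianReal, hXmoment]
  have hρ : 0 ≤ ρ := hXmoment ▸ integral_nonneg fun ω ↦ sq_nonneg (X ω)
  have := Measure.isProbabilityMeasure_map (μ := μ) hY.aemeasurable
  rw [klDivM]
  split_ifs with h
  · have hbound := sub_div_sub_log_le_integral_llr_gaussianReal hv.ne' h.1 h.2 hY2 hY_moment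
      (by positivity)
    rw [add_sub_cancel_right] at hbound
    exact_mod_cast hbound
  · exact le_top
end
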